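/- arXiv:1910.11823 — 2 statements merged into one kernel-verified Lean document; each statement's English description precedes it below -/
import Mathlib

section
/- Let (P_n) and (Q_n) be the Fibonacci product polynomials, i.e. the monic polynomial sequences defined by P_0 = Q_0 = 1, P_1(x) = x - 2, Q_1(x) = x - 3, and P_{n+1}(x) = (x-3)P_n(x) - P_{n-1}(x), Q_{n+1}(x) = (x-3)Q_n(x) - Q_{n-1}(x) for n ≥ 1. Then for every n ≥ 0: P_n(2y+3) = U_n(y) + U_{n-1}(y) and Q_n(2y+3) = U_n(y), where (U_n) are the Chebyshev polynomials of the second kind with U_{-1} = 0. -/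
open Polynomial

/-- Chebyshev polynomials of the second kind. -/
noncomputable def chebU : ℕ → Polynomial ℤ
  | 0 => 1
  | 1 => 2 * X
  | n + 2 => 2 * X * chebU (n + 1) - chebU n

/-- `U_{n-1}`, with the convention `U_{-1} = 0`. -/
noncomputable def chebUpred (n : ℕ) : Polynomial ℤ :=
  if n = 0 then 0 else chebU (n - 1)

/-- Fibonacci product polynomials `P`. -/
noncomputable def fibP : ℕ → Polynomial ℤ
  | 0 => 1
  | 1 => X - 2
  | n + 2 => (X - 3) * fibP (n + 1) - fibP n

/-- Fibonacci product polynomials `Q`. -/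
noncomputable def fibQ : ℕ → Polynomial ℤ
  | 0 => 1
  | 1 => X - 3
  | n + 2 => (X - 3) * fibQ (n + 1) - fibQ n

/-!
The substitution `x = 2y + 3` turns the factor `x - 3` of the recurrence of `P` and `Q` into the
factor `2y` of the Chebyshev recurrence. Hence both sides of each identity solve the same
second-order linear recurrence, and it remains to compare the values at `n = 0` and `n = 1`.
-/

def SolvesRecurrence {R : Type*} [Ring R] (c : R) (f : ℕ → R) : Prop :=
  ∀ n, f (n + 2) = c * f (n + 1) - f n

namespace SolvesRecurrence

variable {R : Type*} [Ring R] {c : R} {f g : ℕ → R}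

theorem add (hf : SolvesRecurrence c f) (hg : SolvesRecurrence c g) :
    SolvesRecurrence c (f + g) := fun n => by
  simp only [Pi.add_apply, hf n, hg n]
  noncomm_ring

theorem eq (hf : SolvesRecurrence c f) (hg : SolvesRecurrence c g) (h0 : f 0 = g 0)
    (h1 : f 1 = g 1) (n : ℕ) : f n = g n := by
  induction n using Nat.twoStepInduction with
  | zero => exact h0
  | one => exact h1
  | more n ih0 ih1 => rw [hf, hg, ih0, ih1]

theorem comp {S : Type*} [CommRing S] {c : S[X]} {f : ℕ → S[X]} (hf : SolvesRecurrence c f)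
    (p : S[X]) : SolvesRecurrence (c.comp p) fun n => (f n).comp p := fun n => by
  simp only [hf n, sub_comp, mul_comp]

end SolvesRecurrence

theorem chebU_solvesRecurrence : SolvesRecurrence (2 * X) chebU := fun _ => rfl

theorem chebUpred_solvesRecurrence : SolvesRecurrence (2 * X) chebUpred
  | 0 => by simp [chebUpred, chebU]
  | n + 1 => by simp [chebUpred, chebU]

theorem fibP_solvesRecurrence : SolvesRecurrence (X - 3) fibP := fun _ => rfl

theorem fibQ_solvesRecurrence : SolvesRecurrence (X - 3) fibQ := fun _ => rfl

theorem stmt6 (n : ℕ) :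
    (fibP n).comp (2 * X + 3) = chebU n + chebUpred n ∧
    (fibQ n).comp (2 * X + 3) = chebU n := by
  have hshift : (X - 3 : ℤ[X]).comp (2 * X + 3) = 2 * X := by simp
  constructor
  · refine (hshift ▸ fibP_solvesRecurrence.comp (2 * X + 3)).eq
      (chebU_solvesRecurrence.add chebUpred_solvesRecurrence) ?_ ?_ n
    · simp [fibP, chebU, chebUpred]
    · simp only [fibP, chebU, chebUpred, Pi.add_apply, sub_comp, X_comp, ofNat_comp,
        one_ne_zero, ↓reduceIte, tsub_self]
      ring
  · refine (hshift ▸ fibQ_solvesRecurrence.comp (2 * X + 3)).eq chebU_solvesRecurrence ?_ ?_ n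
    · simp [fibQ, chebU]
    · simp [fibQ, chebU]
end

section
/- For every n ≥ 1, the Fibonacci number F_{n+2} equals the product ∏_{l=1}^{⌊(n+1)/2⌋} (4·cos²(lπ/(n+2)) + 1). -/
/-!
The roots of the Chebyshev polynomial `U_n` are `cos (k π / (n + 1))` for `k = 1, …, n`, so
`U_n(z) = ∏ (2z - 2 cos (k π / (n + 1)))`. At `z = i / 2` the recurrence of `U` becomes the Fibonacci
recurrence twisted by powers of `i`, so `U_n(i / 2) = iⁿ F_{n+1}`, and taking squared moduli gives
`F_{n+1}² = ∏_{k=1}^{n} (4 cos² (k π / (n + 1)) + 1)`. The factors for `k` and `n + 1 - k` agree and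
a middle factor `k = (n + 1) / 2` equals `1`, so this product is the square of the product over
`k ≤ n / 2`.
-/

open Polynomial Finset Real

theorem Finset.prod_Icc_eq_sq_of_symmetric {M : Type*} [CommMonoid M] {f : ℕ → M} {N : ℕ}
    (hsymm : ∀ k ≤ N, f (N + 1 - k) = f k) (hmid : ∀ k, 2 * k = N + 1 → f k = 1) :
    ∏ k ∈ Icc 1 N, f k = (∏ k ∈ Icc 1 (N / 2), f k) ^ 2 := by
  set L := N / 2
  have hupper : ∏ k ∈ Ico (N + 1 - L) (N + 1), f k = ∏ k ∈ Ico 1 (L + 1), f k := by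
    have h := prod_Ico_reflect f 1 (m := L + 1) (n := N + 1) (by omega)
    rw [show N + 1 + 1 - (L + 1) = N + 1 - L by omega, Nat.add_sub_cancel] at h
    rw [← h]
    exact prod_congr rfl fun k hk ↦ hsymm k (by grind)
  have hmiddle : ∏ k ∈ Ico (L + 1) (N + 1 - L), f k = 1 :=
    prod_eq_one fun k hk ↦ hmid k (by grind)
  rw [← Ico_add_one_right_eq_Icc, ← Ico_add_one_right_eq_Icc,
    ← prod_Ico_consecutive f (by omega : 1 ≤ N + 1 - L) (by omega : N + 1 - L ≤ N + 1),
    ← prod_Ico_consecutive f (by omega : 1 ≤ L + 1) (by omega : L + 1 ≤ N + 1 - L),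
    hupper, hmiddle, sq, mul_one]

namespace Polynomial.Chebyshev

theorem S_eval_eq_pow_mul_fib {R : Type*} [CommRing R] {i : R} (hi : i ^ 2 = -1) (n : ℕ) :
    (S R n).eval i = i ^ n * Nat.fib (n + 1) := by
  induction n using Nat.twoStepInduction with
  | zero => simp
  | one => simp
  | more n ih ih' =>
    push_cast at ih' ⊢
    rw [S_add_two, eval_sub, eval_mul, eval_X, ih, ih', Nat.fib_add_two (n := n + 1),
      Nat.cast_add]
    linear_combination (-i ^ n * Nat.fib (n + 1)) * hi

theorem U_real_eq_prod (n : ℕ) :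
    U ℝ n = Polynomial.C (2 ^ n) *
      ∏ k ∈ range n, (X - Polynomial.C (cos ((k + 1) * π / (n + 1)))) := by
  have hroots : (U ℝ n).roots = (range n).val.map fun k : ℕ ↦ cos ((k + 1) * π / (n + 1)) := by
    rw [roots_U_real, image_val]
    exact Multiset.dedup_eq_self.2 (roots_U_real_nodup n)
  have hcard : Multiset.card (U ℝ n).roots = (U ℝ n).natDegree := by
    simp [hroots, natDegree_U_natCast]
  conv_lhs => rw [← C_leadingCoeff_mul_prod_multiset_X_sub_C hcard]
  rw [hroots, Multiset.map_map, leadingCoeff_U_natCast, prod_eq_multiset_prod]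
  rfl

theorem U_complex_eval_eq_prod (n : ℕ) (z : ℂ) :
    (U ℂ n).eval z = ∏ k ∈ Icc 1 n, (2 * z - 2 * cos (k * π / (n + 1))) := by
  rw [← aeval_U (R := ℝ), U_real_eq_prod]
  simp only [map_mul, map_prod, map_sub, Polynomial.aeval_C, aeval_X, map_pow]
  rw [← Ico_add_one_right_eq_Icc, prod_Ico_eq_prod_range, Nat.add_sub_cancel]
  simp only [← mul_sub, prod_mul_distrib, prod_const, card_range]
  simp [add_comm]

theorem U_complex_eval_I_div_two (n : ℕ) :
    (U ℂ n).eval (Complex.I / 2) = Complex.I ^ n * Nat.fib (n + 1) := by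
  rw [← S_comp_two_mul_X, eval_comp, eval_mul, eval_X, eval_ofNat,
    mul_div_cancel₀ _ two_ne_zero, S_eval_eq_pow_mul_fib Complex.I_sq]

end Polynomial.Chebyshev

theorem Nat.fib_succ_sq_eq_prod_cos (n : ℕ) :
    (Nat.fib (n + 1) : ℝ) ^ 2 = ∏ k ∈ Icc 1 n, (4 * cos (k * π / (n + 1)) ^ 2 + 1) := by
  have hfactor (c : ℝ) : Complex.normSq (2 * (Complex.I / 2) - 2 * c) = 4 * c ^ 2 + 1 := by
    rw [mul_div_cancel₀ _ two_ne_zero,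
      show Complex.I - 2 * c = ((-2 * c : ℝ) : ℂ) + (1 : ℝ) * Complex.I by push_cast; ring,
      Complex.normSq_add_mul_I]
    ring
  have h := congrArg Complex.normSq (Chebyshev.U_complex_eval_I_div_two n)
  rw [Chebyshev.U_complex_eval_eq_prod, map_prod, map_mul, map_pow, Complex.normSq_I, one_pow,
    one_mul, Complex.normSq_natCast] at h
  simp only [hfactor] at h
  rw [sq, h]

theorem prod_Icc_cos_sq_eq_sq (N : ℕ) :
    ∏ k ∈ Icc 1 N, (4 * cos (k * π / (N + 1)) ^ 2 + 1) =
      (∏ k ∈ Icc 1 (N / 2), (4 * cos (k * π / (N + 1)) ^ 2 + 1)) ^ 2 := by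
  refine prod_Icc_eq_sq_of_symmetric (fun k hk ↦ ?_) (fun k hk ↦ ?_)
  · rw [Nat.cast_sub (by omega), Nat.cast_add_one, sub_mul, sub_div,
      mul_div_cancel_left₀ _ (by positivity), cos_pi_sub, neg_sq]
  · have hk0 : (k : ℝ) ≠ 0 := by norm_cast; omega
    rw [show (N : ℝ) + 1 = k * 2 by exact_mod_cast (by omega : N + 1 = k * 2),
      mul_div_mul_left _ _ hk0, cos_pi_div_two]
    norm_num

theorem stmt11_general (n : ℕ) :
    (Nat.fib (n + 2) : ℝ) =
      ∏ l ∈ Finset.Icc 1 ((n + 1) / 2),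
        (4 * Real.cos (l * Real.pi / (n + 2)) ^ 2 + 1) := by
  have h := Nat.fib_succ_sq_eq_prod_cos (n + 1)
  rw [prod_Icc_cos_sq_eq_sq] at h
  push_cast [add_assoc, one_add_one_eq_two] at h
  exact (pow_left_inj₀ (by positivity) (by positivity) two_ne_zero).1 h

theorem stmt11 (n : ℕ) (hn : 1 ≤ n) :
    (Nat.fib (n + 2) : ℝ) =
      ∏ l ∈ Finset.Icc 1 ((n + 1) / 2),
        (4 * Real.cos (l * Real.pi / (n + 2)) ^ 2 + 1) :=
  stmt11_general n
end
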